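/- arXiv:2205.02990 — 4 statements merged into one kernel-verified Lean document; each statement's English description precedes it below -/
import Mathlib

section
/- Let A be an (m+n)×(m+n) real matrix in 2×2 block form A = [[A₁₁, A₁₂],[A₂₁, A₂₂]] with A₁₁ of size m×m and A₂₂ of size n×n. Let U_α, V_α be m×k matrices and U_β, V_β be n×k matrices, all with orthonormal columns, and suppose A₁₂ = U_α X V_βᵀ and A₂₁ = U_β W V_αᵀ for some k×k matrices X and W. Define the block-diagonal matrices U = [[U_α, 0],[0, U_β]] and V = [[V_α, 0],[0, V_β]] and the discrepancy matrix D = A − U (Uᵀ A V) Vᵀ. Then D is block diagonal: its off-diagonal blocks vanish, and its diagonal blocks are D_α = A₁₁ − U_α U_αᵀ A₁₁ V_α V_αᵀ and D_β = A₂₂ − U_β U_βᵀ A₂₂ V_β V_βᵀ; that is, D = [[D_α, 0],[0, D_β]]. -/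
/-!
`U (Uᵀ A V) Vᵀ = (U Uᵀ) A (V Vᵀ)`, and since `U`, `V` are block diagonal, so are the projectors
`U Uᵀ` and `V Vᵀ`; they act on `A` block by block. An off-diagonal block of the form `Uα X Vβᵀ`
is fixed by `Uα Uαᵀ` on the left and by `Vβ Vβᵀ` on the right, so it cancels in `D`.
-/

open Matrix

namespace Matrix

variable {R : Type*} {l m n o p q r s : Type*}

theorem fromBlocks_sub [Sub R] (A : Matrix n l R) (B : Matrix n m R) (C : Matrix o l R)
    (D : Matrix o m R) (A' : Matrix n l R) (B' : Matrix n m R) (C' : Matrix o l R)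
    (D' : Matrix o m R) :
    fromBlocks A B C D - fromBlocks A' B' C' D' =
      fromBlocks (A - A') (B - B') (C - C') (D - D') := by
  ext (i | i) (j | j) <;> rfl

theorem fromBlocks_diagonal_mul_fromBlocks_mul_fromBlocks_diagonal [Fintype l] [Fintype m]
    [Fintype n] [Fintype o] [NonUnitalNonAssocSemiring R]
    (P : Matrix p n R) (Q : Matrix q o R) (A : Matrix n l R) (B : Matrix n m R)
    (C : Matrix o l R) (D : Matrix o m R) (P' : Matrix l r R) (Q' : Matrix m s R) :
    fromBlocks P 0 0 Q * fromBlocks A B C D * fromBlocks P' 0 0 Q' =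
      fromBlocks (P * A * P') (P * B * Q') (Q * C * P') (Q * D * Q') := by
  simp only [fromBlocks_multiply, Matrix.zero_mul, Matrix.mul_zero, add_zero, zero_add]

theorem fromBlocks_diagonal_mul_transpose [Fintype l] [Fintype m] [NonUnitalNonAssocSemiring R]
    (U₁ : Matrix n l R) (U₂ : Matrix o m R) :
    fromBlocks U₁ 0 0 U₂ * (fromBlocks U₁ 0 0 U₂)ᵀ = fromBlocks (U₁ * U₁ᵀ) 0 0 (U₂ * U₂ᵀ) := by
  simp only [fromBlocks_transpose, transpose_zero, fromBlocks_multiply, Matrix.zero_mul,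
    Matrix.mul_zero, add_zero, zero_add]

theorem mul_transpose_mul_mul_mul_transpose_of_orthonormal [Fintype l] [Fintype m] [Fintype n]
    [Fintype o] [DecidableEq l] [DecidableEq o] [Semiring R] {U : Matrix n l R} {V : Matrix m o R}
    (hU : Uᵀ * U = 1) (hV : Vᵀ * V = 1) (X : Matrix l o R) :
    U * Uᵀ * (U * X * Vᵀ) * (V * Vᵀ) = U * X * Vᵀ := by
  calc U * Uᵀ * (U * X * Vᵀ) * (V * Vᵀ) = U * (Uᵀ * U) * X * ((Vᵀ * V) * Vᵀ) := by
        simp only [Matrix.mul_assoc]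
    _ = U * X * Vᵀ := by rw [hU, hV, Matrix.mul_one, Matrix.one_mul]

end Matrix

theorem stmt_1 (m n k : ℕ)
    (A₁₁ : Matrix (Fin m) (Fin m) ℝ) (A₁₂ : Matrix (Fin m) (Fin n) ℝ)
    (A₂₁ : Matrix (Fin n) (Fin m) ℝ) (A₂₂ : Matrix (Fin n) (Fin n) ℝ)
    (Uα Vα : Matrix (Fin m) (Fin k) ℝ) (Uβ Vβ : Matrix (Fin n) (Fin k) ℝ)
    (hUα : Uαᵀ * Uα = 1) (hVα : Vαᵀ * Vα = 1)
    (hUβ : Uβᵀ * Uβ = 1) (hVβ : Vβᵀ * Vβ = 1)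
    (X W : Matrix (Fin k) (Fin k) ℝ)
    (h12 : A₁₂ = Uα * X * Vβᵀ) (h21 : A₂₁ = Uβ * W * Vαᵀ)
    (A : Matrix (Fin m ⊕ Fin n) (Fin m ⊕ Fin n) ℝ)
    (hA : A = Matrix.fromBlocks A₁₁ A₁₂ A₂₁ A₂₂)
    (U V : Matrix (Fin m ⊕ Fin n) (Fin k ⊕ Fin k) ℝ)
    (hU : U = Matrix.fromBlocks Uα 0 0 Uβ)
    (hV : V = Matrix.fromBlocks Vα 0 0 Vβ)
    (D : Matrix (Fin m ⊕ Fin n) (Fin m ⊕ Fin n) ℝ)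
    (hD : D = A - U * (Uᵀ * A * V) * Vᵀ) :
    D = Matrix.fromBlocks
      (A₁₁ - Uα * Uαᵀ * A₁₁ * Vα * Vαᵀ) 0
      0 (A₂₂ - Uβ * Uβᵀ * A₂₂ * Vβ * Vβᵀ) := by
  have hproj : U * (Uᵀ * A * V) * Vᵀ = U * Uᵀ * A * (V * Vᵀ) := by
    simp only [Matrix.mul_assoc]
  rw [hD, hproj, hU, hV, fromBlocks_diagonal_mul_transpose, fromBlocks_diagonal_mul_transpose, hA,
    fromBlocks_diagonal_mul_fromBlocks_mul_fromBlocks_diagonal, fromBlocks_sub, h12, h21,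
    mul_transpose_mul_mul_mul_transpose_of_orthonormal hUα hVβ,
    mul_transpose_mul_mul_mul_transpose_of_orthonormal hUβ hVα, sub_self, sub_self]
  simp only [Matrix.mul_assoc]
end

section
/- Let A be an (m+n)×(m+n) real matrix in 2×2 block form A = [[A₁₁, A₁₂],[A₂₁, A₂₂]] with A₁₁ of size m×m and A₂₂ of size n×n. Let U be an m×k real matrix with orthonormal columns (UᵀU = I_k) such that A₁₂ = U Uᵀ A₁₂ (every column of A₁₂ lies in the range of U). Let Ω be an (m+n)×s real matrix with top block Ω₁ (its first m rows), and set Y = A Ω with top block Y₁ (its first m rows). Then (I_m − U Uᵀ) Y₁ = (I_m − U Uᵀ) A₁₁ Ω₁. -/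
open Matrix

theorem Matrix.submatrix_inl_fromBlocks_mul {l m n o p R : Type*} [Fintype n] [Fintype o]
    [NonUnitalNonAssocSemiring R] (A : Matrix l n R) (B : Matrix l o R) (C : Matrix m n R)
    (D : Matrix m o R) (M : Matrix (n ⊕ o) p R) :
    (fromBlocks A B C D * M).submatrix Sum.inl id
      = A * M.submatrix Sum.inl id + B * M.submatrix Sum.inr id := by
  ext i j
  simp [mul_apply, Fintype.sum_sum_type]

theorem stmt_3_general (m n s k : ℕ)
    (A₁₁ : Matrix (Fin m) (Fin m) ℝ) (A₁₂ : Matrix (Fin m) (Fin n) ℝ)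
    (A₂₁ : Matrix (Fin n) (Fin m) ℝ) (A₂₂ : Matrix (Fin n) (Fin n) ℝ)
    (A : Matrix (Fin m ⊕ Fin n) (Fin m ⊕ Fin n) ℝ)
    (hA : A = Matrix.fromBlocks A₁₁ A₁₂ A₂₁ A₂₂)
    (U : Matrix (Fin m) (Fin k) ℝ)
    (hA₁₂ : A₁₂ = U * Uᵀ * A₁₂)
    (Ω : Matrix (Fin m ⊕ Fin n) (Fin s) ℝ)
    (Y : Matrix (Fin m ⊕ Fin n) (Fin s) ℝ)
    (hY : Y = A * Ω) :
    (1 - U * Uᵀ) * Y.submatrix Sum.inl id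
      = (1 - U * Uᵀ) * A₁₁ * Ω.submatrix Sum.inl id := by
  have hA₁₂_killed : (1 - U * Uᵀ) * A₁₂ = 0 := by
    rw [Matrix.sub_mul, Matrix.one_mul, ← hA₁₂, sub_self]
  rw [hY, hA, submatrix_inl_fromBlocks_mul, Matrix.mul_add, ← Matrix.mul_assoc,
    ← Matrix.mul_assoc, hA₁₂_killed, Matrix.zero_mul, add_zero]

theorem stmt_3 (m n s k : ℕ)
    (A₁₁ : Matrix (Fin m) (Fin m) ℝ) (A₁₂ : Matrix (Fin m) (Fin n) ℝ)
    (A₂₁ : Matrix (Fin n) (Fin m) ℝ) (A₂₂ : Matrix (Fin n) (Fin n) ℝ)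
    (A : Matrix (Fin m ⊕ Fin n) (Fin m ⊕ Fin n) ℝ)
    (hA : A = Matrix.fromBlocks A₁₁ A₁₂ A₂₁ A₂₂)
    (U : Matrix (Fin m) (Fin k) ℝ)
    (hU : Uᵀ * U = 1)
    (hA₁₂ : A₁₂ = U * Uᵀ * A₁₂)
    (Ω : Matrix (Fin m ⊕ Fin n) (Fin s) ℝ)
    (Y : Matrix (Fin m ⊕ Fin n) (Fin s) ℝ)
    (hY : Y = A * Ω) :
    (1 - U * Uᵀ) * Y.submatrix Sum.inl id
      = (1 - U * Uᵀ) * A₁₁ * Ω.submatrix Sum.inl id :=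
  stmt_3_general m n s k A₁₁ A₁₂ A₂₁ A₂₂ A hA U hA₁₂ Ω Y hY
end

section
/- Let A be an m×m real matrix, let U and V be m×k real matrices with orthonormal columns (UᵀU = I_k, VᵀV = I_k), and let Ω and Ψ be m×s real matrices such that Ω Ωᵀ and Ψ Ψᵀ are invertible. Suppose the m×s matrices Y and Z satisfy (I − U Uᵀ) Y = (I − U Uᵀ) A Ω and (I − V Vᵀ) Z = (I − V Vᵀ) Aᵀ Ψ. Then the discrepancy matrix D = A − U Uᵀ A V Vᵀ is given exactly by the formula D = (I − U Uᵀ) Y Ωᵀ (Ω Ωᵀ)⁻¹ + U Uᵀ ( (I − V Vᵀ) Z Ψᵀ (Ψ Ψᵀ)⁻¹ )ᵀ. -/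
/-! The sketches are exact: since `Ω Ωᵀ` is invertible, `Ωᵀ (Ω Ωᵀ)⁻¹` is a right inverse of `Ω`,
so `(I − UUᵀ) Y Ωᵀ (Ω Ωᵀ)⁻¹ = (I − UUᵀ) A`, and likewise the `Z`-term recovers `(I − VVᵀ) Aᵀ`.
What remains is the splitting `D = (I − UUᵀ) A + UUᵀ A (I − VVᵀ)`, a ring identity. -/

open Matrix

namespace Matrix

variable {R : Type*} [CommRing R] {l m n : Type*} [Fintype m] [DecidableEq m] [Fintype n]

theorem mul_mul_transpose_mul_inv_of_isUnit (Ω : Matrix m n R) (hΩ : IsUnit (Ω * Ωᵀ))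
    (P : Matrix l m R) : P * Ω * Ωᵀ * (Ω * Ωᵀ)⁻¹ = P := by
  rw [Matrix.mul_assoc P, Matrix.mul_assoc P, Matrix.mul_nonsing_inv _
    ((isUnit_iff_isUnit_det _).mp hΩ), Matrix.mul_one]

theorem mul_transpose_mul_inv_eq_of_mul_eq {Ω : Matrix m n R} (hΩ : IsUnit (Ω * Ωᵀ))
    {P : Matrix l m R} {Y : Matrix m n R} {X : Matrix l m R} (hY : P * Y = X * Ω) :
    P * Y * Ωᵀ * (Ω * Ωᵀ)⁻¹ = X := by
  rw [hY, mul_mul_transpose_mul_inv_of_isUnit Ω hΩ]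

variable {k : Type*} [Fintype k]

theorem sub_mul_mul_transpose_eq_add (A : Matrix m m R) (U V : Matrix m k R) :
    A - U * Uᵀ * A * V * Vᵀ = (1 - U * Uᵀ) * A + U * Uᵀ * ((1 - V * Vᵀ) * Aᵀ)ᵀ := by
  simp only [transpose_mul, transpose_sub, transpose_one, transpose_transpose]
  noncomm_ring
  simp only [Matrix.mul_assoc]

end Matrix

theorem stmt_5_general (m k s : ℕ)
    (A : Matrix (Fin m) (Fin m) ℝ)
    (U V : Matrix (Fin m) (Fin k) ℝ)
    (Ω Ψ : Matrix (Fin m) (Fin s) ℝ)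
    (hΩ : IsUnit (Ω * Ωᵀ)) (hΨ : IsUnit (Ψ * Ψᵀ))
    (Y Z : Matrix (Fin m) (Fin s) ℝ)
    (hY : (1 - U * Uᵀ) * Y = (1 - U * Uᵀ) * A * Ω)
    (hZ : (1 - V * Vᵀ) * Z = (1 - V * Vᵀ) * Aᵀ * Ψ) :
    A - U * Uᵀ * A * V * Vᵀ
      = (1 - U * Uᵀ) * Y * Ωᵀ * (Ω * Ωᵀ)⁻¹
        + U * Uᵀ * ((1 - V * Vᵀ) * Z * Ψᵀ * (Ψ * Ψᵀ)⁻¹)ᵀ := by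
  rw [mul_transpose_mul_inv_eq_of_mul_eq hΩ hY, mul_transpose_mul_inv_eq_of_mul_eq hΨ hZ]
  exact sub_mul_mul_transpose_eq_add A U V

theorem stmt_5 (m k s : ℕ)
    (A : Matrix (Fin m) (Fin m) ℝ)
    (U V : Matrix (Fin m) (Fin k) ℝ)
    (hU : Uᵀ * U = 1) (hV : Vᵀ * V = 1)
    (Ω Ψ : Matrix (Fin m) (Fin s) ℝ)
    (hΩ : IsUnit (Ω * Ωᵀ)) (hΨ : IsUnit (Ψ * Ψᵀ))
    (Y Z : Matrix (Fin m) (Fin s) ℝ)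
    (hY : (1 - U * Uᵀ) * Y = (1 - U * Uᵀ) * A * Ω)
    (hZ : (1 - V * Vᵀ) * Z = (1 - V * Vᵀ) * Aᵀ * Ψ) :
    A - U * Uᵀ * A * V * Vᵀ
      = (1 - U * Uᵀ) * Y * Ωᵀ * (Ω * Ωᵀ)⁻¹
        + U * Uᵀ * ((1 - V * Vᵀ) * Z * Ψᵀ * (Ψ * Ψᵀ)⁻¹)ᵀ :=
  stmt_5_general m k s A U V Ω Ψ hΩ hΨ Y Z hY hZ
end

section
/- Let A be an (m+n)×(m+n) real matrix in 2×2 block form A = [[A₁₁, A₁₂],[A₂₁, A₂₂]] with A₁₁ of size m×m and A₂₂ of size n×n. Let Ω be an (m+n)×s real matrix with top block Ω₁ (its first m rows) and bottom block Ω₂ (its last n rows), and let P be an s×r real matrix with Ω₁ P = 0. Set Y = A Ω and let Y₁ denote the first m rows of Y. Suppose rank(A₁₂ Ω₂ P) = rank(A₁₂), and let Q be an m×k real matrix with orthonormal columns (QᵀQ = I_k) whose column space equals the column space of Y₁ P. Then Q Qᵀ A₁₂ = A₁₂; that is, the basis matrix computed from the compressed sample Y₁P exactly captures the range of the off-diagonal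 block A₁₂. -/
open Matrix

/-
Since Ω₁ P = 0, the top block of Y P is Y₁ P = A₁₁ Ω₁ P + A₁₂ Ω₂ P = A₁₂ (Ω₂ P). Its column space
is contained in that of A₁₂ and has the same dimension by the rank hypothesis, so the two agree.
Hence col(Q) = col(A₁₂), and Q Qᵀ, the orthogonal projector onto col(Q), fixes A₁₂.
-/

namespace Matrix

theorem submatrix_inl_fromBlocks_mul_s9 {R l n₁ n₂ m₁ m₂ : Type*} [Semiring R]
    [Fintype n₁] [Fintype n₂]
    (B₁₁ : Matrix m₁ n₁ R) (B₁₂ : Matrix m₁ n₂ R) (B₂₁ : Matrix m₂ n₁ R) (B₂₂ : Matrix m₂ n₂ R)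
    (Ω : Matrix (n₁ ⊕ n₂) l R) :
    (fromBlocks B₁₁ B₁₂ B₂₁ B₂₂ * Ω).submatrix Sum.inl id
      = B₁₁ * Ω.submatrix Sum.inl id + B₁₂ * Ω.submatrix Sum.inr id := by
  conv_lhs => rw [← fromRows_toRows Ω, fromBlocks_mul_fromRows]
  rfl

theorem range_mulVecLin_mul_eq_of_rank_eq {K m n l : Type*} [Field K]
    [Fintype m] [Fintype n] [Fintype l] {B : Matrix m n K} {C : Matrix n l K}
    (h : (B * C).rank = B.rank) :
    LinearMap.range (B * C).mulVecLin = LinearMap.range B.mulVecLin := by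
  refine Submodule.eq_of_le_of_finrank_eq ?_ h
  rw [mulVecLin_mul]
  exact LinearMap.range_comp_le_range _ _

theorem mul_transpose_mulVec_of_mem_range {R m k : Type*} [CommSemiring R]
    [Fintype m] [Fintype k] [DecidableEq k] {Q : Matrix m k R} (hQ : Qᵀ * Q = 1)
    {v : m → R} (hv : v ∈ LinearMap.range Q.mulVecLin) : (Q * Qᵀ) *ᵥ v = v := by
  obtain ⟨y, rfl⟩ := hv
  change (Q * Qᵀ) *ᵥ (Q *ᵥ y) = Q *ᵥ y
  rw [mulVec_mulVec, Matrix.mul_assoc, hQ, Matrix.mul_one]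

theorem mul_transpose_mul_eq_self_of_range_le {R m n k : Type*} [CommSemiring R]
    [Fintype m] [Fintype n] [Fintype k] [DecidableEq k] {Q : Matrix m k R} (hQ : Qᵀ * Q = 1)
    {B : Matrix m n R} (h : LinearMap.range B.mulVecLin ≤ LinearMap.range Q.mulVecLin) :
    Q * Qᵀ * B = B := by
  refine ext_iff_mulVec.mpr fun x => ?_
  rw [← mulVec_mulVec]
  exact mul_transpose_mulVec_of_mem_range hQ (h ⟨x, rfl⟩)

end Matrix

theorem stmt_9 (m n s r k : ℕ)
    (A₁₁ : Matrix (Fin m) (Fin m) ℝ) (A₁₂ : Matrix (Fin m) (Fin n) ℝ)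
    (A₂₁ : Matrix (Fin n) (Fin m) ℝ) (A₂₂ : Matrix (Fin n) (Fin n) ℝ)
    (A : Matrix (Fin m ⊕ Fin n) (Fin m ⊕ Fin n) ℝ)
    (hA : A = Matrix.fromBlocks A₁₁ A₁₂ A₂₁ A₂₂)
    (Ω : Matrix (Fin m ⊕ Fin n) (Fin s) ℝ)
    (P : Matrix (Fin s) (Fin r) ℝ)
    (hP : Ω.submatrix Sum.inl id * P = 0)
    (Y : Matrix (Fin m ⊕ Fin n) (Fin s) ℝ)
    (hY : Y = A * Ω)
    (hrank : (A₁₂ * (Ω.submatrix Sum.inr id * P)).rank = A₁₂.rank)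
    (Q : Matrix (Fin m) (Fin k) ℝ)
    (hQ : Qᵀ * Q = 1)
    (hrange : LinearMap.range Q.mulVecLin
      = LinearMap.range (Y.submatrix Sum.inl id * P).mulVecLin) :
    Q * Qᵀ * A₁₂ = A₁₂ := by
  have hY₁P : Y.submatrix Sum.inl id * P = A₁₂ * (Ω.submatrix Sum.inr id * P) := by
    rw [hY, hA, submatrix_inl_fromBlocks_mul_s9, Matrix.add_mul, Matrix.mul_assoc, hP,
      Matrix.mul_zero, zero_add, Matrix.mul_assoc]
  refine mul_transpose_mul_eq_self_of_range_le hQ (le_of_eq ?_)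
  rw [hrange, hY₁P, range_mulVecLin_mul_eq_of_rank_eq hrank]
end
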